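/- Let n ∈ ℕ. Let v : ℤⁿ × ℤⁿ → ℝ be skew-symmetric, vanishing unless ‖z' − z‖ = 1 (nearest neighbors), and divergence-free: Σ_{z'} v(z, z') = 0 for every z ∈ ℤⁿ. Let V' be a type, φ : ℤⁿ → V', and suppose for each ordered nearest-neighbor pair (z, z') there is given a finite path P(z,z') = (r₀, …, r_N) in V' with r₀ = φ(z), r_N = φ(z'), such that P(z',z) is the reversal of P(z,z'). Assume local finiteness: every x ∈ V' appears as a vertex of only finitely many of the paths P(z,z'). Then the pushforward flow φ^♯v(x,y) := ½ Σ_{(z,z') nearest neighbors} v(z,z') · J_{P(z,z')}(x,y) is a well-defined skew-symmetric flow (for each (x,y) only finitely many terms are nonzero), and it is divergence-free: for every x ∈ V', Σ_y (φ^♯v)(x,y) = 0, the sum having finitely many nonzero terms. -/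

import Mathlib

/-- The embedding of the lattice `ℤⁿ` into Euclidean space `ℝⁿ`. -/
noncomputable def latticeEmbed (n : ℕ) (z : Fin n → ℤ) : EuclideanSpace ℝ (Fin n) :=
  (WithLp.equiv 2 (Fin n → ℝ)).symm (fun i => (z i : ℝ))

/-- Divergence of the unit flow along a path: telescoping. -/
private lemma pathDiv {V' : Type*} [DecidableEq V'] (r : ℕ → V') (M : ℕ) (a : V')
    (B : Finset V') (hB : ∀ k ≤ M, r k ∈ B) :
    ∑ b ∈ B, ((((Finset.range M).filter fun k => r k = a ∧ r (k + 1) = b).card : ℝ) -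
      (((Finset.range M).filter fun k => r (k + 1) = a ∧ r k = b).card : ℝ)) =
      (if r 0 = a then (1 : ℝ) else 0) - (if r M = a then (1 : ℝ) else 0) := by
  have h1 : ∀ b : V', (((Finset.range M).filter fun k => r k = a ∧ r (k + 1) = b).card : ℝ)
      = ∑ k ∈ Finset.range M, if r k = a ∧ r (k + 1) = b then (1 : ℝ) else 0 := by
    intro b
    rw [Finset.card_filter, Nat.cast_sum]
    simp [apply_ite (Nat.cast : ℕ → ℝ)]
  have h2 : ∀ b : V', (((Finset.range M).filter fun k => r (k + 1) = a ∧ r k = b).card : ℝ)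
      = ∑ k ∈ Finset.range M, if r (k + 1) = a ∧ r k = b then (1 : ℝ) else 0 := by
    intro b
    rw [Finset.card_filter, Nat.cast_sum]
    simp [apply_ite (Nat.cast : ℕ → ℝ)]
  simp_rw [h1, h2, ← Finset.sum_sub_distrib]
  rw [Finset.sum_comm]
  have h3 : ∀ k ∈ Finset.range M,
      (∑ b ∈ B, ((if r k = a ∧ r (k + 1) = b then (1 : ℝ) else 0) -
        (if r (k + 1) = a ∧ r k = b then (1 : ℝ) else 0)))
      = (if r k = a then (1 : ℝ) else 0) - (if r (k + 1) = a then (1 : ℝ) else 0) := by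
    intro k hk
    rw [Finset.mem_range] at hk
    rw [Finset.sum_sub_distrib]
    have e1 : ∑ b ∈ B, (if r k = a ∧ r (k + 1) = b then (1 : ℝ) else 0)
        = if r k = a then (1 : ℝ) else 0 := by
      by_cases h : r k = a
      · simp only [h, true_and]
        rw [Finset.sum_ite_eq]
        simp [hB (k + 1) (by omega)]
      · simp [h]
    have e2 : ∑ b ∈ B, (if r (k + 1) = a ∧ r k = b then (1 : ℝ) else 0)
        = if r (k + 1) = a then (1 : ℝ) else 0 := by
      by_cases h : r (k + 1) = a
      · simp only [h, true_and]
        rw [Finset.sum_ite_eq]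
        simp [hB k (by omega)]
      · simp [h]
    rw [e1, e2]
  rw [Finset.sum_congr rfl h3, Finset.sum_range_sub']

private lemma pushforward_aux {n : ℕ} {V' : Type*} [DecidableEq V']
    (v : (Fin n → ℤ) → (Fin n → ℤ) → ℝ)
    (hskew : ∀ z z', v z z' = -v z' z)
    (hnn : ∀ z z', v z z' ≠ 0 → ‖latticeEmbed n z' - latticeEmbed n z‖ = 1)
    (hdiv : ∀ z, ∑ᶠ z', v z z' = 0)
    (φ : (Fin n → ℤ) → V')
    (N : (Fin n → ℤ) → (Fin n → ℤ) → ℕ)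
    (P : (Fin n → ℤ) → (Fin n → ℤ) → ℕ → V')
    (hP0 : ∀ z z', ‖latticeEmbed n z' - latticeEmbed n z‖ = 1 → P z z' 0 = φ z)
    (hPN : ∀ z z', ‖latticeEmbed n z' - latticeEmbed n z‖ = 1 → P z z' (N z z') = φ z')
    (hloc : ∀ x : V', {p : (Fin n → ℤ) × (Fin n → ℤ) |
      ‖latticeEmbed n p.2 - latticeEmbed n p.1‖ = 1 ∧
        ∃ k ≤ N p.1 p.2, P p.1 p.2 k = x}.Finite)
    (JP : (Fin n → ℤ) → (Fin n → ℤ) → V' → V' → ℝ)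
    (hJP : ∀ z z' a b, JP z z' a b =
      ((((Finset.range (N z z')).filter fun k => P z z' k = a ∧ P z z' (k + 1) = b).card : ℝ) -
        (((Finset.range (N z z')).filter fun k => P z z' (k + 1) = a ∧ P z z' k = b).card : ℝ)))
    (K : V' → V' → ℝ)
    (hK : ∀ a b, K a b =
      (1 / 2 : ℝ) * ∑ᶠ p : (Fin n → ℤ) × (Fin n → ℤ), v p.1 p.2 * JP p.1 p.2 a b) :
    (∀ a b, {p : (Fin n → ℤ) × (Fin n → ℤ) | v p.1 p.2 * JP p.1 p.2 a b ≠ 0}.Finite) ∧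
      (∀ a b, K a b = -K b a) ∧
      ∀ a : V', {b : V' | K a b ≠ 0}.Finite ∧ ∑ᶠ b, K a b = 0 := by
  classical
  -- the key structural fact: if a summand is nonzero, then the pair is a nearest-neighbor
  -- pair whose path visits both `a` and `b`.
  have key : ∀ (a b : V') (p : (Fin n → ℤ) × (Fin n → ℤ)), v p.1 p.2 * JP p.1 p.2 a b ≠ 0 →
      (‖latticeEmbed n p.2 - latticeEmbed n p.1‖ = 1 ∧ ∃ k ≤ N p.1 p.2, P p.1 p.2 k = a) ∧
        ∃ k ≤ N p.1 p.2, P p.1 p.2 k = b := by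
    intro a b p hp
    have hv : v p.1 p.2 ≠ 0 := left_ne_zero_of_mul hp
    have hJ : JP p.1 p.2 a b ≠ 0 := right_ne_zero_of_mul hp
    have hnorm := hnn _ _ hv
    rw [hJP] at hJ
    have hne : ((Finset.range (N p.1 p.2)).filter fun k =>
          P p.1 p.2 k = a ∧ P p.1 p.2 (k + 1) = b).Nonempty ∨
        ((Finset.range (N p.1 p.2)).filter fun k =>
          P p.1 p.2 (k + 1) = a ∧ P p.1 p.2 k = b).Nonempty := by
      by_contra h
      push_neg at h
      rw [h.1, h.2] at hJ
      simp at hJ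
    rcases hne with ⟨k, hk⟩ | ⟨k, hk⟩ <;>
      simp only [Finset.mem_filter, Finset.mem_range] at hk
    · exact ⟨⟨hnorm, k, le_of_lt hk.1, hk.2.1⟩, k + 1, by omega, hk.2.2⟩
    · exact ⟨⟨hnorm, k + 1, by omega, hk.2.1⟩, k, le_of_lt hk.1, hk.2.2⟩
  have part1 : ∀ a b, {p : (Fin n → ℤ) × (Fin n → ℤ) |
      v p.1 p.2 * JP p.1 p.2 a b ≠ 0}.Finite :=
    fun a b => (hloc a).subset fun p hp => (key a b p hp).1
  have hJPskew : ∀ z z' a b, JP z z' a b = -(JP z z' b a) := by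
    intro z z' a b
    rw [hJP, hJP]
    have e1 : ((Finset.range (N z z')).filter fun k => P z z' k = a ∧ P z z' (k + 1) = b)
        = ((Finset.range (N z z')).filter fun k => P z z' (k + 1) = b ∧ P z z' k = a) :=
      Finset.filter_congr fun k _ => and_comm
    have e2 : ((Finset.range (N z z')).filter fun k => P z z' (k + 1) = a ∧ P z z' k = b)
        = ((Finset.range (N z z')).filter fun k => P z z' k = b ∧ P z z' (k + 1) = a) :=
      Finset.filter_congr fun k _ => and_comm
    rw [e1, e2]
    ring
  have part2 : ∀ a b, K a b = -K b a := by
    intro a b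
    rw [hK, hK]
    have : (fun p : (Fin n → ℤ) × (Fin n → ℤ) => v p.1 p.2 * JP p.1 p.2 a b)
        = fun p => -(v p.1 p.2 * JP p.1 p.2 b a) := by
      funext p
      rw [hJPskew _ _ a b]
      ring
    rw [this, finsum_neg_distrib]
    ring
  refine ⟨part1, part2, ?_⟩
  intro a
  set T : Finset ((Fin n → ℤ) × (Fin n → ℤ)) := (hloc a).toFinset with hTdef
  have hmemT : ∀ p : (Fin n → ℤ) × (Fin n → ℤ), p ∈ T ↔
      ‖latticeEmbed n p.2 - latticeEmbed n p.1‖ = 1 ∧ ∃ k ≤ N p.1 p.2, P p.1 p.2 k = a :=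
    fun p => Set.Finite.mem_toFinset _
  set B : Finset V' := T.biUnion (fun p => (Finset.range (N p.1 p.2 + 1)).image (P p.1 p.2))
    with hBdef
  have hKsum : ∀ b, K a b = (1 / 2 : ℝ) * ∑ p ∈ T, v p.1 p.2 * JP p.1 p.2 a b := by
    intro b
    rw [hK]
    congr 1
    exact finsum_eq_finset_sum_of_support_subset _
      (fun p hp => (hmemT p).mpr (key a b p hp).1)
  have hsuppK : ∀ b, K a b ≠ 0 → b ∈ B := by
    intro b hb
    rw [hK] at hb
    have hex : ∃ p : (Fin n → ℤ) × (Fin n → ℤ), v p.1 p.2 * JP p.1 p.2 a b ≠ 0 := by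
      by_contra h
      push_neg at h
      rw [finsum_eq_zero_of_forall_eq_zero h, mul_zero] at hb
      exact hb rfl
    obtain ⟨p, hp⟩ := hex
    have hk := key a b p hp
    refine Finset.mem_biUnion.mpr ⟨p, (hmemT p).mpr hk.1, ?_⟩
    obtain ⟨k, hk1, hk2⟩ := hk.2
    exact Finset.mem_image.mpr ⟨k, Finset.mem_range.mpr (by omega), hk2⟩
  refine ⟨B.finite_toSet.subset (fun b hb => hsuppK b hb), ?_⟩
  rw [finsum_eq_finset_sum_of_support_subset (K a) (fun b hb => hsuppK b hb)]
  have step1 : ∑ b ∈ B, K a b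
      = (1 / 2 : ℝ) * ∑ p ∈ T, ∑ b ∈ B, v p.1 p.2 * JP p.1 p.2 a b := by
    rw [Finset.sum_congr rfl (fun b _ => hKsum b), ← Finset.mul_sum, Finset.sum_comm]
  have step2 : ∀ p ∈ T, ∑ b ∈ B, v p.1 p.2 * JP p.1 p.2 a b
      = v p.1 p.2 * ((if φ p.1 = a then (1 : ℝ) else 0) - (if φ p.2 = a then (1 : ℝ) else 0)) := by
    intro p hp
    rw [← Finset.mul_sum]
    congr 1
    have hnorm := ((hmemT p).mp hp).1
    have hBmem : ∀ k ≤ N p.1 p.2, P p.1 p.2 k ∈ B := fun k hk =>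
      Finset.mem_biUnion.mpr ⟨p, hp,
        Finset.mem_image.mpr ⟨k, Finset.mem_range.mpr (by omega), rfl⟩⟩
    have hpd := pathDiv (P p.1 p.2) (N p.1 p.2) a B hBmem
    simp_rw [hJP]
    rw [hpd, hP0 _ _ hnorm, hPN _ _ hnorm]
  rw [step1, Finset.sum_congr rfl step2]
  -- it remains to show the final divergence sum vanishes
  set T₂ : Finset (Fin n → ℤ) := T.image Prod.fst with hT2
  set T₃ : Finset (Fin n → ℤ) := T.image Prod.snd with hT3
  have hsub : T ⊆ T₂ ×ˢ T₃ := by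
    intro p hp
    exact Finset.mem_product.mpr ⟨Finset.mem_image_of_mem _ hp, Finset.mem_image_of_mem _ hp⟩
  have hdiv' : ∀ z', ∑ᶠ z, v z z' = 0 := by
    intro z'
    have : (fun z => v z z') = fun z => -(v z' z) := funext fun z => hskew z z'
    rw [this, finsum_neg_distrib, hdiv z', neg_zero]
  have sum1 : ∑ p ∈ T, v p.1 p.2 * (if φ p.1 = a then (1 : ℝ) else 0) = 0 := by
    have hzero : ∀ p : (Fin n → ℤ) × (Fin n → ℤ),
        v p.1 p.2 * (if φ p.1 = a then (1 : ℝ) else 0) ≠ 0 → p ∈ T := by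
      intro p hp
      have hv : v p.1 p.2 ≠ 0 := left_ne_zero_of_mul hp
      have hφ : φ p.1 = a := by
        by_contra h
        simp [h] at hp
      have hnorm := hnn _ _ hv
      exact (hmemT p).mpr ⟨hnorm, 0, Nat.zero_le _, by rw [hP0 _ _ hnorm, hφ]⟩
    rw [Finset.sum_subset hsub (fun p _ hp => by_contra fun h => hp (hzero p h))]
    rw [Finset.sum_product]
    apply Finset.sum_eq_zero
    intro z hz
    by_cases hφ : φ z = a
    · simp only [if_pos hφ, mul_one]
      have hsupp : Function.support (fun z' => v z z') ⊆ ↑T₃ := by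
        intro z' hz'
        have hv : v z z' ≠ 0 := hz'
        have hnorm := hnn _ _ hv
        have : (z, z') ∈ T := (hmemT (z, z')).mpr
          ⟨hnorm, 0, Nat.zero_le _, by rw [hP0 _ _ hnorm, hφ]⟩
        exact Finset.mem_coe.mpr (Finset.mem_image_of_mem _ this)
      rw [← finsum_eq_finset_sum_of_support_subset _ hsupp, hdiv z]
    · simp [hφ]
  have sum2 : ∑ p ∈ T, v p.1 p.2 * (if φ p.2 = a then (1 : ℝ) else 0) = 0 := by
    have hzero : ∀ p : (Fin n → ℤ) × (Fin n → ℤ),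
        v p.1 p.2 * (if φ p.2 = a then (1 : ℝ) else 0) ≠ 0 → p ∈ T := by
      intro p hp
      have hv : v p.1 p.2 ≠ 0 := left_ne_zero_of_mul hp
      have hφ : φ p.2 = a := by
        by_contra h
        simp [h] at hp
      have hnorm := hnn _ _ hv
      exact (hmemT p).mpr ⟨hnorm, N p.1 p.2, le_refl _, by rw [hPN _ _ hnorm, hφ]⟩
    rw [Finset.sum_subset hsub (fun p _ hp => by_contra fun h => hp (hzero p h))]
    rw [Finset.sum_product, Finset.sum_comm]
    apply Finset.sum_eq_zero
    intro z' hz'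
    by_cases hφ : φ z' = a
    · simp only [if_pos hφ, mul_one]
      have hsupp : Function.support (fun z => v z z') ⊆ ↑T₂ := by
        intro z hz
        have hv : v z z' ≠ 0 := hz
        have hnorm := hnn _ _ hv
        have : (z, z') ∈ T := (hmemT (z, z')).mpr
          ⟨hnorm, N z z', le_refl _, by rw [hPN _ _ hnorm, hφ]⟩
        exact Finset.mem_coe.mpr (Finset.mem_image_of_mem _ this)
      rw [← finsum_eq_finset_sum_of_support_subset _ hsupp, hdiv' z']
    · simp [hφ]
  have : ∑ p ∈ T, v p.1 p.2 *
      ((if φ p.1 = a then (1 : ℝ) else 0) - (if φ p.2 = a then (1 : ℝ) else 0)) = 0 := by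
    simp_rw [mul_sub]
    rw [Finset.sum_sub_distrib, sum1, sum2, sub_zero]
  rw [this, mul_zero]

/-- The pushforward along `φ : ℤⁿ → V'` (via a locally finite family of paths between
images of nearest neighbors) of a divergence-free nearest-neighbor flow `v` on `ℤⁿ`
is a well-defined skew-symmetric divergence-free flow on `V'`. -/
theorem pushforward_of_divergence_free_lattice_flow (n : ℕ) (V' : Type*) [DecidableEq V']
    (v : (Fin n → ℤ) → (Fin n → ℤ) → ℝ)
    (hskew : ∀ z z', v z z' = -v z' z)
    (hnn : ∀ z z', v z z' ≠ 0 → ‖latticeEmbed n z' - latticeEmbed n z‖ = 1)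
    (hdiv : ∀ z, ∑ᶠ z', v z z' = 0)
    (φ : (Fin n → ℤ) → V')
    (N : (Fin n → ℤ) → (Fin n → ℤ) → ℕ)
    (P : (Fin n → ℤ) → (Fin n → ℤ) → ℕ → V')
    (hP0 : ∀ z z', ‖latticeEmbed n z' - latticeEmbed n z‖ = 1 → P z z' 0 = φ z)
    (hPN : ∀ z z', ‖latticeEmbed n z' - latticeEmbed n z‖ = 1 → P z z' (N z z') = φ z')
    (hrev : ∀ z z', ‖latticeEmbed n z' - latticeEmbed n z‖ = 1 →
      N z' z = N z z' ∧ ∀ k ≤ N z z', P z' z k = P z z' (N z z' - k))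
    (hloc : ∀ x : V', {p : (Fin n → ℤ) × (Fin n → ℤ) |
      ‖latticeEmbed n p.2 - latticeEmbed n p.1‖ = 1 ∧
        ∃ k ≤ N p.1 p.2, P p.1 p.2 k = x}.Finite) :
    letI JP : (Fin n → ℤ) → (Fin n → ℤ) → V' → V' → ℝ := fun z z' a b =>
      ((((Finset.range (N z z')).filter fun k => P z z' k = a ∧ P z z' (k + 1) = b).card : ℝ) -
        (((Finset.range (N z z')).filter fun k => P z z' (k + 1) = a ∧ P z z' k = b).card : ℝ))
    letI K : V' → V' → ℝ := fun a b =>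
      (1 / 2 : ℝ) * ∑ᶠ p : (Fin n → ℤ) × (Fin n → ℤ), v p.1 p.2 * JP p.1 p.2 a b
    (∀ a b, {p : (Fin n → ℤ) × (Fin n → ℤ) | v p.1 p.2 * JP p.1 p.2 a b ≠ 0}.Finite) ∧
      (∀ a b, K a b = -K b a) ∧
      ∀ a : V', {b : V' | K a b ≠ 0}.Finite ∧ ∑ᶠ b, K a b = 0 :=
  pushforward_aux v hskew hnn hdiv φ N P hP0 hPN hloc _ (fun _ _ _ _ => rfl) _
    (fun _ _ => rfl)
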